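/- arXiv:1510.07513 — 5 statements merged into one kernel-verified Lean document; each statement's English description precedes it below -/
import Mathlib

section
/- Let μ be a Borel probability measure on {0,1}^ℕ satisfying the conformality condition μ(σ(A)) = ∫_A e^{βF} dμ for every Borel set A on which the shift σ is injective (with F as above). Then for every k ≥ 1, μ of the cylinder set [1^{k-1}0] equals exp(-β H_k). -/
open MeasureTheory Real Filter Set
open scoped ENNReal

noncomputable def harmonicNum (k : ℕ) : ℝ := ∑ j ∈ Finset.range k, (1 : ℝ) / (j + 1)

def shift (x : ℕ → Bool) : ℕ → Bool := fun n => x (n + 1)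

def oneInf : ℕ → Bool := fun _ => true

open Classical in
noncomputable def F (x : ℕ → Bool) : ℝ :=
  if h : ∃ i, x i = false then 1 / ((Nat.find h : ℝ) + 1) else 0

def ConformalMeasure (β : ℝ) (μ : Measure (ℕ → Bool)) : Prop :=
  ∀ A : Set (ℕ → Bool), MeasurableSet A → Set.InjOn shift A →
    μ (shift '' A) = ∫⁻ x in A, ENNReal.ofReal (Real.exp (β * F x)) ∂μ

def Y : ℕ → Set (ℕ → Bool)
  | 0 => {oneInf}
  | n + 1 => {x | shift^[n + 1] x = oneInf} \ {x | shift^[n] x = oneInf}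

def prepend (k : ℕ) (y : ℕ → Bool) : ℕ → Bool :=
  fun i => if i < k - 1 then true else if i = k - 1 then false else y (i - k)

noncomputable def Z (β : ℝ) (n : ℕ) : ℝ :=
  ∑' x : Y n, Real.exp (-β * ∑ j ∈ Finset.range n, F (shift^[j] (x : ℕ → Bool)))
def C (m : ℕ) : Set (ℕ → Bool) := {x | (∀ i, i < m → x i = true) ∧ x m = false}

lemma measC (m : ℕ) : MeasurableSet (C m) := by
  have h1 : C m = (⋂ i ∈ Finset.range m, (fun x : ℕ → Bool => x i) ⁻¹' {true}) ∩
      ((fun x : ℕ → Bool => x m) ⁻¹' {false}) := by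
    ext x; simp [C]
  rw [h1]
  exact (MeasurableSet.biInter (Finset.range m).countable_toSet
    (fun i _ => (measurable_pi_apply i) (measurableSet_singleton true))).inter
    ((measurable_pi_apply m) (measurableSet_singleton false))

lemma injC (m : ℕ) : Set.InjOn shift (C m) := by
  intro x hx y hy h
  funext i
  cases i with
  | zero =>
    rcases Nat.eq_zero_or_pos m with hm | hm
    · subst hm; rw [hx.2, hy.2]
    · rw [hx.1 0 hm, hy.1 0 hm]
  | succ n => exact congrFun h n

lemma imgC (m : ℕ) : shift '' C (m + 1) = C m := by
  ext y
  constructor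
  · rintro ⟨x, hx, rfl⟩
    refine ⟨fun i hi => hx.1 (i + 1) (by omega), hx.2⟩
  · intro hy
    refine ⟨fun n => if n = 0 then true else y (n - 1), ⟨?_, ?_⟩, ?_⟩
    · intro i hi
      cases i with
      | zero => simp
      | succ j => simpa using hy.1 j (by omega)
    · simpa using hy.2
    · funext n; simp [shift]

lemma imgC0 : shift '' C 0 = Set.univ := by
  ext y
  simp only [Set.mem_univ, iff_true]
  refine ⟨fun n => if n = 0 then false else y (n - 1), ⟨fun i hi => by omega, by simp⟩, ?_⟩
  funext n; simp [shift]

lemma FC {m : ℕ} {x : ℕ → Bool} (hx : x ∈ C m) : F x = 1 / (m + 1) := by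
  have h : ∃ i, x i = false := ⟨m, hx.2⟩
  classical
  rw [F, dif_pos h]
  have : Nat.find h = m := by
    rw [Nat.find_eq_iff]
    exact ⟨hx.2, fun j hj => by simp [hx.1 j hj]⟩
  rw [this]

lemma integC (β : ℝ) (μ : Measure (ℕ → Bool)) (m : ℕ) :
    ∫⁻ x in C m, ENNReal.ofReal (Real.exp (β * F x)) ∂μ =
      ENNReal.ofReal (Real.exp (β / (m + 1))) * μ (C m) := by
  rw [setLIntegral_congr_fun (measC m)
    (fun x hx => by rw [FC hx])]
  rw [setLIntegral_const]
  rw [mul_one_div]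

lemma key (β : ℝ) (μ : Measure (ℕ → Bool)) [IsProbabilityMeasure μ]
    (hc : ConformalMeasure β μ) (m : ℕ) :
    μ (C m) = ENNReal.ofReal (Real.exp (-β * harmonicNum (m + 1))) := by
  induction m with
  | zero =>
    have h := hc (C 0) (measC 0) (injC 0)
    rw [imgC0, integC, measure_univ] at h
    have : μ (C 0) = ENNReal.ofReal (Real.exp (-(β/1))) * 1 := by
      rw [h, ← mul_assoc, ← ENNReal.ofReal_mul (Real.exp_nonneg _), ← Real.exp_add]
      norm_num
    simpa [harmonicNum] using this
  | succ n ih =>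
    have h := hc (C (n + 1)) (measC (n + 1)) (injC (n + 1))
    rw [imgC, integC, ih] at h
    push_cast at h ⊢
    have h2 : μ (C (n + 1)) =
        ENNReal.ofReal (Real.exp (-(β / (n + 1 + 1)))) *
          (ENNReal.ofReal (Real.exp (β / (n + 1 + 1))) * μ (C (n + 1))) := by
      rw [← mul_assoc, ← ENNReal.ofReal_mul (Real.exp_nonneg _), ← Real.exp_add]
      norm_num
    rw [← h] at h2
    rw [h2, ← ENNReal.ofReal_mul (Real.exp_nonneg _), ← Real.exp_add]
    congr 2
    have : harmonicNum (n + 1 + 1) = harmonicNum (n + 1) + 1 / (n + 1 + 1) := by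
      simp [harmonicNum, Finset.sum_range_succ]
    rw [this]
    push_cast
    ring

theorem conformal_cylinder_measure (β : ℝ) (μ : Measure (ℕ → Bool))
    [IsProbabilityMeasure μ] (hc : ConformalMeasure β μ) (k : ℕ) (hk : 1 ≤ k) :
    μ {x : ℕ → Bool | (∀ i, i < k - 1 → x i = true) ∧ x (k - 1) = false} =
      ENNReal.ofReal (Real.exp (-β * harmonicNum k)) := by
  obtain ⟨m, rfl⟩ : ∃ m, k = m + 1 := ⟨k - 1, by omega⟩
  simpa [C] using key β μ hc m
end

section
/- If there exists an e^{βF}-conformal Borel probability measure μ on {0,1}^ℕ for the shift σ (i.e., μ(σ(A)) = ∫_A e^{βF} dμ for Borel sets A on which σ is injective), then ∑_{k=1}^∞ exp(-β H_k) ≤ 1; equivalently β ≥ β₀ where β₀ is the unique solution of ∑_k exp(-β₀ H_k) = 1. -/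
open MeasureTheory Real Filter Set
open scoped ENNReal

def Cyl (k : ℕ) : Set (ℕ → Bool) := {x | (∀ i, i < k → x i = true) ∧ x k = false}

lemma measurable_Cyl (k : ℕ) : MeasurableSet (Cyl k) := by
  have h1 : ∀ (i : ℕ) (b : Bool), MeasurableSet {x : ℕ → Bool | x i = b} := by
    intro i b
    have : {x : ℕ → Bool | x i = b} = (fun x : ℕ → Bool => x i) ⁻¹' {b} := rfl
    rw [this]
    exact (measurable_pi_apply i) (measurableSet_singleton b)
  have : Cyl k = (⋂ i ∈ Finset.range k, {x : ℕ → Bool | x i = true}) ∩ {x | x k = false} := by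
    ext x; simp [Cyl]
  rw [this]
  exact (MeasurableSet.biInter (Finset.range k).countable_toSet fun i _ => h1 i true).inter
    (h1 k false)

lemma injOn_Cyl (k : ℕ) : Set.InjOn shift (Cyl k) := by
  intro x hx y hy h
  funext n
  cases n with
  | zero =>
    rcases Nat.eq_zero_or_pos k with hk | hk
    · subst hk; rw [hx.2, hy.2]
    · rw [hx.1 0 hk, hy.1 0 hk]
  | succ n => exact congrFun h n

lemma img_Cyl_zero : shift '' Cyl 0 = Set.univ := by
  ext y
  simp only [Set.mem_image, Set.mem_univ, iff_true]
  refine ⟨fun i => if i = 0 then false else y (i - 1), ⟨fun i h => absurd h (Nat.not_lt_zero i), by simp⟩, ?_⟩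
  funext n; simp [shift]

lemma img_Cyl_succ (k : ℕ) : shift '' Cyl (k + 1) = Cyl k := by
  ext y
  constructor
  · rintro ⟨x, ⟨h1, h2⟩, rfl⟩
    exact ⟨fun i hi => h1 (i + 1) (by omega), h2⟩
  · rintro ⟨h1, h2⟩
    refine ⟨fun i => if i = 0 then true else y (i - 1), ⟨?_, ?_⟩, ?_⟩
    · intro i hi
      cases i with
      | zero => simp
      | succ j => simpa using h1 j (by omega)
    · simpa using h2
    · funext n; simp [shift]

lemma F_Cyl {k : ℕ} {x : ℕ → Bool} (hx : x ∈ Cyl k) : F x = 1 / (k + 1) := by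
  have h : ∃ i, x i = false := ⟨k, hx.2⟩
  have hk : Nat.find h = k := by
    rw [Nat.find_eq_iff]
    exact ⟨hx.2, fun j hj => by simp [hx.1 j hj]⟩
  rw [F, dif_pos h, hk]

lemma conf_step (β : ℝ) (μ : Measure (ℕ → Bool)) (hc : ConformalMeasure β μ) (k : ℕ) :
    μ (shift '' Cyl k) = ENNReal.ofReal (Real.exp (β * (1 / (k + 1)))) * μ (Cyl k) := by
  rw [hc (Cyl k) (measurable_Cyl k) (injOn_Cyl k),
    setLIntegral_congr_fun (measurable_Cyl k)
      (fun x hx => by rw [F_Cyl hx]),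
    setLIntegral_const]

lemma measure_Cyl (β : ℝ) (μ : Measure (ℕ → Bool)) [IsProbabilityMeasure μ]
    (hc : ConformalMeasure β μ) (k : ℕ) :
    μ (Cyl k) = ENNReal.ofReal (Real.exp (-β * harmonicNum (k + 1))) := by
  have key : ∀ k, μ (Cyl k) =
      ENNReal.ofReal (Real.exp (-(β * (1 / (k + 1))))) * μ (shift '' Cyl k) := by
    intro k
    have hne : ENNReal.ofReal (Real.exp (β * (1 / (k + 1)))) ≠ 0 :=
      (ENNReal.ofReal_pos.mpr (Real.exp_pos _)).ne'
    have htop : ENNReal.ofReal (Real.exp (β * (1 / (k + 1)))) ≠ ⊤ := ENNReal.ofReal_ne_top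
    rw [conf_step β μ hc k, ← mul_assoc, ← ENNReal.ofReal_mul (Real.exp_pos _).le,
      ← Real.exp_add]
    simp
  induction k with
  | zero =>
    have := key 0
    rw [img_Cyl_zero, measure_univ, mul_one] at this
    rw [this]
    norm_num [harmonicNum]
  | succ k ih =>
    have := key (k + 1)
    rw [img_Cyl_succ, ih, ← ENNReal.ofReal_mul (Real.exp_pos _).le, ← Real.exp_add] at this
    rw [this]
    congr 2
    have : harmonicNum (k + 2) = harmonicNum (k + 1) + 1 / (k + 2) := by
      simp [harmonicNum, Finset.sum_range_succ]
      ring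
    push_cast [this]
    ring

lemma disjoint_Cyl : Pairwise (Function.onFun Disjoint Cyl) := by
  intro i j hij
  rw [Function.onFun, Set.disjoint_left]
  intro x hxi hxj
  rcases lt_or_gt_of_ne hij with h | h
  · have := hxj.1 i h; rw [hxi.2] at this; exact Bool.false_ne_true this
  · have := hxi.1 j h; rw [hxj.2] at this; exact Bool.false_ne_true this

lemma myHarmonicPos (k : ℕ) : 0 < harmonicNum (k + 1) := by
  apply Finset.sum_pos
  · intro j _; positivity
  · exact Finset.nonempty_range_iff.mpr (Nat.succ_ne_zero k)

theorem conformal_implies_sum_le_one (β β₀ : ℝ) (hβ₀pos : 0 < β₀)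
    (hβ₀ : ∑' k : ℕ, Real.exp (-β₀ * harmonicNum (k + 1)) = 1)
    (μ : Measure (ℕ → Bool)) [IsProbabilityMeasure μ] (hc : ConformalMeasure β μ) :
    (∑' k : ℕ, Real.exp (-β * harmonicNum (k + 1))) ≤ 1 ∧ β₀ ≤ β := by
  set f : ℕ → ℝ := fun k => Real.exp (-β * harmonicNum (k + 1)) with hf
  have hle : (∑' k : ℕ, ENNReal.ofReal (f k)) ≤ 1 := by
    calc (∑' k : ℕ, ENNReal.ofReal (f k)) = ∑' k : ℕ, μ (Cyl k) := by
          exact tsum_congr fun k => (measure_Cyl β μ hc k).symm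
      _ = μ (⋃ k, Cyl k) := (measure_iUnion disjoint_Cyl measurable_Cyl).symm
      _ ≤ 1 := prob_le_one
  have hS : (∑' k : ℕ, ENNReal.ofReal (f k)) ≠ ⊤ := ne_top_of_le_ne_top ENNReal.one_ne_top hle
  have hsum : Summable f := by
    have h2 := ENNReal.summable_toReal hS
    have h3 : (fun k => (ENNReal.ofReal (f k)).toReal) = f := by
      funext k; exact ENNReal.toReal_ofReal (Real.exp_pos _).le
    exact h3 ▸ h2
  have h1 : (∑' k : ℕ, f k) ≤ 1 := by
    have heq : (∑' k : ℕ, f k) = (∑' k : ℕ, ENNReal.ofReal (f k)).toReal := by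
      rw [ENNReal.tsum_toReal_eq (fun k => ENNReal.ofReal_ne_top)]
      exact tsum_congr fun k => (ENNReal.toReal_ofReal (Real.exp_pos _).le).symm
    rw [heq]
    calc (∑' k : ℕ, ENNReal.ofReal (f k)).toReal ≤ (1 : ℝ≥0∞).toReal :=
          ENNReal.toReal_mono ENNReal.one_ne_top hle
      _ = 1 := by simp
  refine ⟨h1, ?_⟩
  by_contra hlt
  push_neg at hlt
  have hterm : ∀ k, Real.exp (-β₀ * harmonicNum (k + 1)) < f k := by
    intro k
    apply Real.exp_lt_exp.mpr
    have := myHarmonicPos k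
    nlinarith
  have : (∑' k : ℕ, Real.exp (-β₀ * harmonicNum (k + 1))) < ∑' k : ℕ, f k :=
    Summable.tsum_lt_tsum (fun k => (hterm k).le) (hterm 0)
      (Summable.of_nonneg_of_le (fun k => (Real.exp_pos _).le) (fun k => (hterm k).le) hsum) hsum
  rw [hβ₀] at this
  linarith
end

section
/- Any two Borel probability measures μ, ν on {0,1}^ℕ that are both e^{βF}-conformal for the shift σ (same β) are equal. -/
open MeasureTheory Real Filter Set
open scoped ENNReal

namespace CU

def cylSet (n : ℕ) (w : ℕ → Bool) : Set (ℕ → Bool) := {x | ∀ i < n, x i = w i}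

lemma measurableSet_cylSet (n : ℕ) (w : ℕ → Bool) : MeasurableSet (cylSet n w) := by
  have h : cylSet n w = ⋂ i ∈ Finset.range n, {x : ℕ → Bool | x i = w i} := by
    ext x; simp [cylSet]
  rw [h]
  exact MeasurableSet.biInter (Finset.range n).countable_toSet
    (fun i _ => measurableSet_eq_fun (measurable_pi_apply i) measurable_const)

lemma shift_image_cylSet (n : ℕ) (u : ℕ → Bool) :
    shift '' cylSet (n + 1) u = cylSet n (shift u) := by
  ext y
  constructor
  · rintro ⟨x, hx, rfl⟩ i hi
    exact hx (i + 1) (by omega)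
  · intro hy
    refine ⟨fun i => if i = 0 then u 0 else y (i - 1), fun i hi => ?_, ?_⟩
    · cases i with
      | zero => simp
      | succ k => simpa [shift] using hy k (by omega)
    · funext i; simp [shift]

lemma injOn_shift_cylSet (n : ℕ) (u : ℕ → Bool) :
    Set.InjOn shift (cylSet (n + 1) u) := by
  intro x hx y hy h
  funext i
  cases i with
  | zero => rw [hx 0 (by omega), hy 0 (by omega)]
  | succ k => exact congrFun h k

lemma F_eq_on_cylSet {n j : ℕ} {u : ℕ → Bool} (hj : j < n + 1) (hjf : u j = false)
    (hmin : ∀ i < j, u i = true) {x : ℕ → Bool} (hx : x ∈ cylSet (n + 1) u) :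
    F x = 1 / ((j : ℝ) + 1) := by
  have hxj : x j = false := by rw [hx j hj]; exact hjf
  have h : ∃ i, x i = false := ⟨j, hxj⟩
  have hfind : Nat.find h = j := by
    rw [Nat.find_eq_iff]
    refine ⟨hxj, fun i hi => ?_⟩
    rw [hx i (by omega), hmin i hi]; simp
  simp only [F, dif_pos h, hfind]

lemma key (β : ℝ) (μ : Measure (ℕ → Bool)) (hμ : ConformalMeasure β μ)
    {n j : ℕ} {u : ℕ → Bool} (hj : j < n + 1) (hjf : u j = false)
    (hmin : ∀ i < j, u i = true) :
    μ (cylSet n (shift u)) =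
      ENNReal.ofReal (Real.exp (β * (1 / ((j : ℝ) + 1)))) * μ (cylSet (n + 1) u) := by
  have h1 := hμ (cylSet (n + 1) u) (measurableSet_cylSet _ _) (injOn_shift_cylSet n u)
  rw [shift_image_cylSet] at h1
  rw [h1,
    setLIntegral_congr_fun (measurableSet_cylSet _ _)
      (fun x hx => by rw [F_eq_on_cylSet hj hjf hmin hx]),
    setLIntegral_const]

lemma cyl_eq (β : ℝ) (μ ν : Measure (ℕ → Bool)) [IsProbabilityMeasure μ]
    [IsProbabilityMeasure ν] (hμ : ConformalMeasure β μ) (hν : ConformalMeasure β ν) :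
    ∀ n u, μ (cylSet n u) = ν (cylSet n u) := by
  intro n
  induction n with
  | zero =>
    intro u
    have h : cylSet 0 u = Set.univ := by ext x; simp [cylSet]
    rw [h]; simp
  | succ n ih =>
    have main : ∀ u : ℕ → Bool, (∃ j, j < n + 1 ∧ u j = false) →
        μ (cylSet (n + 1) u) = ν (cylSet (n + 1) u) := by
      rintro u ⟨j0, hj0, hf0⟩
      have hex : ∃ i, u i = false := ⟨j0, hf0⟩
      set j := Nat.find hex with hjdef
      have hjf : u j = false := Nat.find_spec hex
      have hmin : ∀ i < j, u i = true := fun i hi => by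
        have := Nat.find_min hex hi; simpa using this
      have hj : j < n + 1 := lt_of_le_of_lt (Nat.find_min' hex hf0) hj0
      have hμk := key β μ hμ hj hjf hmin
      have hνk := key β ν hν hj hjf hmin
      have h2 := ih (shift u)
      rw [hμk, hνk] at h2
      exact (ENNReal.mul_right_inj
        (ne_of_gt (ENNReal.ofReal_pos.mpr (Real.exp_pos _))) ENNReal.ofReal_ne_top).mp h2
    intro u
    by_cases hcase : ∃ j, j < n + 1 ∧ u j = false
    · exact main u hcase
    · push_neg at hcase
      have htrue : ∀ i < n + 1, u i = true := fun i hi => by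
        have := hcase i hi; simpa using this
      set u' : ℕ → Bool := fun i => if i = n then false else u i with hu'
      have hsplit : ∀ ρ : Measure (ℕ → Bool),
          ρ (cylSet n u) = ρ (cylSet (n + 1) u) + ρ (cylSet (n + 1) u') := by
        intro ρ
        have hdis : Disjoint (cylSet (n + 1) u) (cylSet (n + 1) u') := by
          rw [Set.disjoint_left]
          intro x hx hx'
          have h1 : x n = true := by rw [hx n (by omega)]; exact htrue n (by omega)
          have h2 : x n = false := by rw [hx' n (by omega)]; simp [hu']
          rw [h1] at h2; exact Bool.noConfusion h2
        have hun : cylSet n u = cylSet (n + 1) u ∪ cylSet (n + 1) u' := by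
          ext x
          constructor
          · intro hx
            cases h : x n with
            | true =>
              left; intro i hi
              rcases Nat.lt_succ_iff_lt_or_eq.mp hi with hi' | rfl
              · exact hx i hi'
              · rw [h, htrue i (by omega)]
            | false =>
              right; intro i hi
              rcases Nat.lt_succ_iff_lt_or_eq.mp hi with hi' | rfl
              · rw [hx i hi']; simp [hu']; omega
              · rw [h]; simp [hu']
          · rintro (hx | hx) i hi
            · exact hx i (by omega)
            · rw [hx i (by omega)]; simp [hu']; omega
        rw [hun, measure_union hdis (measurableSet_cylSet _ _)]
      have h1 : μ (cylSet (n + 1) u') = ν (cylSet (n + 1) u') :=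
        main u' ⟨n, by omega, by simp [hu']⟩
      have h2 := ih u
      rw [hsplit μ, hsplit ν, h1] at h2
      exact WithTop.add_right_cancel (measure_ne_top ν _) h2

def cylSets : Set (Set (ℕ → Bool)) := {A | ∃ n w, A = cylSet n w}

lemma inter_aux {n m : ℕ} (hnm : n ≤ m) {w v : ℕ → Bool}
    (h : (cylSet n w ∩ cylSet m v).Nonempty) : cylSet n w ∩ cylSet m v = cylSet m v := by
  obtain ⟨x, hxw, hxv⟩ := h
  apply Set.inter_eq_self_of_subset_right
  intro y hy i hi
  rw [hy i (lt_of_lt_of_le hi hnm), ← hxv i (lt_of_lt_of_le hi hnm), hxw i hi]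

lemma isPiSystem_cylSets : IsPiSystem cylSets := by
  rintro A ⟨n, w, rfl⟩ B ⟨m, v, rfl⟩ hne
  rcases le_total n m with h | h
  · rw [inter_aux h hne]; exact ⟨m, v, rfl⟩
  · rw [Set.inter_comm] at hne ⊢
    rw [inter_aux h hne]; exact ⟨n, w, rfl⟩

lemma eval_preimage (i : ℕ) (s : Set Bool) :
    (fun x : ℕ → Bool => x i) ⁻¹' s =
      ⋃ (v : Fin (i + 1) → Bool) (_ : v ⟨i, Nat.lt_succ_self i⟩ ∈ s),
        cylSet (i + 1) (fun k => if h : k < i + 1 then v ⟨k, h⟩ else true) := by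
  ext x
  simp only [Set.mem_preimage, Set.mem_iUnion]
  constructor
  · intro hx
    refine ⟨fun k => x k, hx, fun k hk => ?_⟩
    simp [hk]
  · rintro ⟨v, hv, hx⟩
    have := hx i (Nat.lt_succ_self i)
    simpa [this] using hv

lemma generate : (inferInstance : MeasurableSpace (ℕ → Bool)) =
    MeasurableSpace.generateFrom cylSets := by
  apply le_antisymm
  · rw [show (inferInstance : MeasurableSpace (ℕ → Bool)) = MeasurableSpace.pi from rfl,
      MeasurableSpace.pi]
    refine iSup_le fun i => ?_
    rw [MeasurableSpace.comap_le_iff_le_map]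
    intro s _
    show MeasurableSet[MeasurableSpace.generateFrom cylSets] ((fun x : ℕ → Bool => x i) ⁻¹' s)
    rw [eval_preimage]
    refine MeasurableSet.iUnion fun v => ?_
    refine MeasurableSet.iUnion fun _ => ?_
    exact MeasurableSpace.measurableSet_generateFrom ⟨i + 1, _, rfl⟩
  · refine MeasurableSpace.generateFrom_le ?_
    rintro A ⟨n, w, rfl⟩
    exact measurableSet_cylSet n w

end CU

theorem conformal_measure_unique (β : ℝ) (μ ν : Measure (ℕ → Bool))
    [IsProbabilityMeasure μ] [IsProbabilityMeasure ν]
    (hμ : ConformalMeasure β μ) (hν : ConformalMeasure β ν) : μ = ν := by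
  refine ext_of_generate_finite CU.cylSets CU.generate CU.isPiSystem_cylSets ?_ (by simp)
  rintro A ⟨n, w, rfl⟩
  exact CU.cyl_eq β μ ν hμ hν n w
end

section
/- For n ≥ 1 and Y_n = σ^{-n}(1^∞) \ σ^{-(n-1)}(1^∞), the quantity Z_n := ∑_{x ∈ Y_n} exp(-β ∑_{j=0}^{n-1} F(σ^j(x))) satisfies the recursion Z_n = ∑_{k=1}^n exp(-β H_k) Z_{n-k}, with Z_0 = 1. -/
open MeasureTheory Real Filter Set
open scoped ENNReal

lemma shift_iter (j : ℕ) (x : ℕ → Bool) (i : ℕ) : shift^[j] x i = x (i + j) := by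
  induction j generalizing x with
  | zero => rfl
  | succ j ih =>
    rw [Function.iterate_succ_apply, ih]
    simp [shift, Nat.add_assoc]

lemma mem_Y_iff {n : ℕ} (hn : 1 ≤ n) {x : ℕ → Bool} :
    x ∈ Y n ↔ x (n - 1) = false ∧ ∀ i, n ≤ i → x i = true := by
  obtain ⟨m, rfl⟩ := Nat.exists_eq_add_of_le hn
  simp only [Nat.add_comm 1 m]
  show x ∈ {x | shift^[m + 1] x = oneInf} \ {x | shift^[m] x = oneInf} ↔ _
  constructor
  · rintro ⟨h1, h2⟩
    simp only [Set.mem_setOf_eq, funext_iff, shift_iter, oneInf] at h1 h2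
    push_neg at h2
    obtain ⟨i, hi⟩ := h2
    rw [ne_eq, Bool.not_eq_true] at hi
    have him : i = 0 := by
      by_contra hne
      have : i + m = (i - 1) + (m + 1) := by omega
      rw [this, h1] at hi
      simp at hi
    refine ⟨by simpa [him] using hi, fun i hle => ?_⟩
    have : i = (i - (m + 1)) + (m + 1) := by omega
    rw [this]; exact h1 _
  · rintro ⟨h1, h2⟩
    constructor
    · simp only [Set.mem_setOf_eq, funext_iff, shift_iter, oneInf]
      intro i; exact h2 _ (by omega)
    · simp only [Set.mem_setOf_eq, funext_iff, shift_iter, oneInf, not_forall]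
      exact ⟨0, by simpa using h1⟩

lemma finite_Y (n : ℕ) : (Y n).Finite := by
  cases n with
  | zero => exact Set.finite_singleton _
  | succ m =>
    have : Y (m + 1) ⊆ (fun v : Fin (m + 1) → Bool =>
        (fun i => if h : i < m + 1 then v ⟨i, h⟩ else true : ℕ → Bool)) '' Set.univ := by
      intro x hx
      rw [mem_Y_iff (by omega)] at hx
      refine ⟨fun i => x i, Set.mem_univ _, ?_⟩
      funext i
      by_cases h : i < m + 1
      · simp [h]
      · simp only [h, dif_neg, not_false_iff]
        exact (hx.2 i (by omega)).symm
    exact Set.Finite.subset ((Set.finite_univ).image _) this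

open Classical in
lemma F_eq {x : ℕ → Bool} {m : ℕ} (hm : x m = false) (hlt : ∀ i, i < m → x i = true) :
    F x = 1 / ((m : ℝ) + 1) := by
  have h : ∃ i, x i = false := ⟨m, hm⟩
  rw [F, dif_pos h]
  have : Nat.find h = m := by
    rw [Nat.find_eq_iff]
    exact ⟨hm, fun i hi => by simp [hlt i hi]⟩
  rw [this]

lemma shift_iter_prepend {k : ℕ} (hk : 1 ≤ k) (y : ℕ → Bool) :
    shift^[k] (prepend k y) = y := by
  funext i
  rw [shift_iter, prepend]
  have h1 : ¬ (i + k < k - 1) := by omega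
  have h2 : ¬ (i + k = k - 1) := by omega
  simp only [h1, if_false, h2]
  congr 1; omega

lemma prepend_mem {n k : ℕ} {y : ℕ → Bool} (hk1 : 1 ≤ k) (hkn : k ≤ n) (hy : y ∈ Y (n - k)) :
    prepend k y ∈ Y n := by
  rw [mem_Y_iff (le_trans hk1 hkn)]
  constructor
  · rcases eq_or_lt_of_le hkn with h | h
    · subst h
      simp [prepend]
    · have hnk : 1 ≤ n - k := by omega
      rw [mem_Y_iff hnk] at hy
      have h1 : ¬ (n - 1 < k - 1) := by omega
      have h2 : ¬ (n - 1 = k - 1) := by omega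
      simp only [prepend, h1, if_false, h2]
      have : n - 1 - k = n - k - 1 := by omega
      rw [this]; exact hy.1
  · intro i hi
    have h1 : ¬ (i < k - 1) := by omega
    have h2 : ¬ (i = k - 1) := by omega
    simp only [prepend, h1, if_false, h2]
    rcases Nat.eq_or_lt_of_le hkn with h | h
    · have : n - k = 0 := by omega
      rw [this] at hy
      have : y = oneInf := hy
      rw [this]; rfl
    · rw [mem_Y_iff (by omega)] at hy
      exact hy.2 _ (by omega)

lemma F_shift_prepend {k j : ℕ} (y : ℕ → Bool) (hj : j < k) :
    F (shift^[j] (prepend k y)) = 1 / (((k - 1 - j : ℕ) : ℝ) + 1) := by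
  apply F_eq
  · rw [shift_iter, prepend]
    have h1 : ¬ (k - 1 - j + j < k - 1) := by omega
    have h2 : k - 1 - j + j = k - 1 := by omega
    simp [h1, h2]
  · intro i hi
    rw [shift_iter, prepend]
    have : i + j < k - 1 := by omega
    simp [this]

lemma birkhoff {n k : ℕ} (hk1 : 1 ≤ k) (hkn : k ≤ n) (y : ℕ → Bool) :
    ∑ j ∈ Finset.range n, F (shift^[j] (prepend k y)) =
      harmonicNum k + ∑ j ∈ Finset.range (n - k), F (shift^[j] y) := by
  have hn : n = k + (n - k) := by omega
  nth_rewrite 1 [hn]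
  rw [Finset.sum_range_add]
  congr 1
  · rw [harmonicNum, ← Finset.sum_range_reflect (fun j => (1 : ℝ) / (j + 1)) k]
    apply Finset.sum_congr rfl
    intro j hj
    rw [Finset.mem_range] at hj
    rw [F_shift_prepend y hj]
  · apply Finset.sum_congr rfl
    intro j hj
    rw [add_comm k j, Function.iterate_add_apply, shift_iter_prepend hk1]

lemma decomp {n : ℕ} (hn : 1 ≤ n) {x : ℕ → Bool} (hx : x ∈ Y n) :
    ∃ k, 1 ≤ k ∧ k ≤ n ∧ shift^[k] x ∈ Y (n - k) ∧ prepend k (shift^[k] x) = x := by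
  classical
  rw [mem_Y_iff hn] at hx
  have h : ∃ i, x i = false := ⟨n - 1, hx.1⟩
  set m := Nat.find h with hm
  have hxm : x m = false := Nat.find_spec h
  have hlt : ∀ i, i < m → x i = true := fun i hi => by
    have := Nat.find_min h hi
    simpa using this
  have hmn : m ≤ n - 1 := Nat.find_min' h hx.1
  refine ⟨m + 1, by omega, by omega, ?_, ?_⟩
  · rcases Nat.eq_or_lt_of_le (show m + 1 ≤ n by omega) with hc | hc
    · have : n - (m + 1) = 0 := by omega
      rw [this]
      show shift^[m+1] x ∈ ({oneInf} : Set _)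
      have : shift^[m+1] x = oneInf := by
        funext i
        rw [shift_iter]
        exact hx.2 _ (by omega)
      simp [this]
    · rw [mem_Y_iff (by omega)]
      constructor
      · rw [shift_iter]
        have : n - (m + 1) - 1 + (m + 1) = n - 1 := by omega
        rw [this]; exact hx.1
      · intro i hi
        rw [shift_iter]
        exact hx.2 _ (by omega)
  · funext i
    rw [prepend]
    by_cases h1 : i < m + 1 - 1
    · simp only [h1, if_true]
      exact (hlt i (by omega)).symm
    · by_cases h2 : i = m + 1 - 1
      · subst h2
        simp [hxm]
      · simp only [h1, if_false, h2]
        rw [shift_iter]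
        congr 1; omega

lemma prepend_inj {k : ℕ} (hk : 1 ≤ k) : Function.Injective (prepend k) := by
  intro y y' hyy
  have := congrArg (shift^[k]) hyy
  rwa [shift_iter_prepend hk, shift_iter_prepend hk] at this

lemma Z_eq_sum (β : ℝ) (m : ℕ) :
    Z β m = ∑ x ∈ (finite_Y m).toFinset,
      Real.exp (-β * ∑ j ∈ Finset.range m, F (shift^[j] x)) := by
  rw [Z, tsum_subtype (Y m) (fun z => Real.exp (-β * ∑ j ∈ Finset.range m, F (shift^[j] z)))]
  rw [tsum_eq_sum (s := (finite_Y m).toFinset)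
    (fun b hb => Set.indicator_of_notMem (by simpa [Set.Finite.mem_toFinset] using hb) _)]
  exact Finset.sum_congr rfl fun x hx =>
    Set.indicator_of_mem ((Set.Finite.mem_toFinset _).mp hx) _

theorem Z_recursion (β : ℝ) :
    Z β 0 = 1 ∧
    ∀ n, 1 ≤ n → Z β n = ∑ k ∈ Finset.Icc 1 n, Real.exp (-β * harmonicNum k) * Z β (n - k) := by
  classical
  constructor
  · rw [Z_eq_sum]
    have h : (finite_Y 0).toFinset = {oneInf} := by
      ext z
      simp only [Set.Finite.mem_toFinset, Finset.mem_singleton]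
      exact Iff.rfl
    rw [h, Finset.sum_singleton]
    simp
  · intro n hn
    have hT : (finite_Y n).toFinset =
        (Finset.Icc 1 n).biUnion
          (fun k => ((finite_Y (n - k)).toFinset).image (prepend k)) := by
      ext x
      simp only [Set.Finite.mem_toFinset, Finset.mem_biUnion, Finset.mem_Icc,
        Finset.mem_image]
      constructor
      · intro hx
        obtain ⟨k, hk1, hkn, hmem, heq⟩ := decomp hn hx
        exact ⟨k, ⟨hk1, hkn⟩, shift^[k] x, hmem, heq⟩
      · rintro ⟨k, ⟨hk1, hkn⟩, y, hy, rfl⟩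
        exact prepend_mem hk1 hkn hy
    rw [Z_eq_sum, hT, Finset.sum_biUnion]
    · apply Finset.sum_congr rfl
      intro k hk
      rw [Finset.mem_Icc] at hk
      rw [Finset.sum_image (fun y _ y' _ h => prepend_inj hk.1 h)]
      rw [Z_eq_sum, Finset.mul_sum]
      apply Finset.sum_congr rfl
      intro y hy
      rw [birkhoff hk.1 hk.2, mul_add, Real.exp_add]
    · intro k hk k' hk' hne
      simp only [Finset.mem_coe, Finset.mem_Icc] at hk hk'
      apply Finset.disjoint_left.mpr
      rintro a ha ha'
      simp only [Finset.mem_image, Set.Finite.mem_toFinset] at ha ha'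
      obtain ⟨y, _, rfl⟩ := ha
      obtain ⟨y', _, heq⟩ := ha'
      apply hne
      by_contra hkk
      rcases Nat.lt_or_ge k k' with hlt | hge
      · have h1 : prepend k y (k - 1) = false := by
          simp [prepend]
        have h2 : prepend k' y' (k - 1) = true := by
          have : k - 1 < k' - 1 := by omega
          simp [prepend, this]
        rw [heq, h1] at h2
        exact absurd h2 (by simp)
      · have hlt : k' < k := by omega
        have h1 : prepend k' y' (k' - 1) = false := by simp [prepend]
        have h2 : prepend k y (k' - 1) = true := by
          have : k' - 1 < k - 1 := by omega
          simp [prepend, this]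
        rw [heq, h2] at h1
        exact absurd h1 (by simp)
end

section
/- Let x be a periodic point of minimal period p for a map φ : X → X and F : X → ℝ a function with ∑_{j=0}^{p-1} F(φ^j(x)) = 0. Suppose M := ∑_{n=1}^∞ ∑_{y ∈ Y_n} exp(-β ∑_{j=0}^{n-1} F(φ^j(y))) < ∞ where Y_n = φ^{-n}(x) \ ⋃_{j<n} φ^{-j}(x). Then m_x := (1+M)^{-1}(δ_x + ∑_{n≥1} ∑_{y ∈ Y_n} exp(-β ∑_{j=0}^{n-1} F(φ^j(y))) δ_y) is a probability measure satisfying m_x(φ(A)) = ∫_A e^{βF} dm_x for every set A contained in ⋃_n φ^{-n}(x) on which φ is injective. -/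
open MeasureTheory Real Filter Set
open scoped ENNReal

theorem periodic_point_conformal_measure {X : Type*} [MeasurableSpace X]
    [MeasurableSingletonClass X]
    (φ : X → X) (G : X → ℝ) (β : ℝ) (x : X) (p : ℕ) (hp : 0 < p)
    (hper : φ^[p] x = x) (hmin : ∀ q, 0 < q → q < p → φ^[q] x ≠ x)
    (hzero : ∑ j ∈ Finset.range p, G (φ^[j] x) = 0)
    (Yn : ℕ → Set X)
    (hY : ∀ n, Yn n = {y | φ^[n] y = x} \ ⋃ j ∈ Finset.range n, {y | φ^[j] y = x})
    (hΛ : (⋃ n : ℕ, {y | φ^[n] y = x}).Countable)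
    (M : ℝ≥0∞)
    (hM : M = ∑' (n : ℕ), ∑' (y : Yn (n + 1)),
      ENNReal.ofReal (Real.exp (-β * ∑ j ∈ Finset.range (n + 1), G (φ^[j] (y : X)))))
    (hMfin : M ≠ ⊤) :
    ∃ m : Measure X, IsProbabilityMeasure m ∧
      (∀ B : Set X, MeasurableSet B →
        m B = (1 + M)⁻¹ * (Set.indicator B (fun _ => (1 : ℝ≥0∞)) x +
          ∑' (n : ℕ), ∑' (y : Yn (n + 1)),
            Set.indicator B
              (fun z => ENNReal.ofReal (Real.exp (-β * ∑ j ∈ Finset.range (n + 1), G (φ^[j] z))))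
              (y : X))) ∧
      (∀ A : Set X, A ⊆ ⋃ n : ℕ, {y | φ^[n] y = x} → Set.InjOn φ A →
        m (φ '' A) = ∫⁻ z in A, ENNReal.ofReal (Real.exp (β * G z)) ∂m) := by
    classical
  -- characterization of membership in `Yn (n+1)`
  have hYmem : ∀ (n : ℕ) (z : X), z ∈ Yn (n+1) ↔ φ^[n+1] z = x ∧ ∀ j ≤ n, φ^[j] z ≠ x := by
    intro n z
    rw [hY]
    simp only [Set.mem_diff, Set.mem_setOf_eq, Set.mem_iUnion, Finset.mem_range, not_exists]
    constructor
    · rintro ⟨h1, h2⟩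
      exact ⟨h1, fun j hj hc => h2 j (Nat.lt_succ_of_le hj) hc⟩
    · rintro ⟨h1, h2⟩
      exact ⟨h1, fun j hj hc => h2 j (Nat.lt_succ_iff.mp hj) hc⟩
  have hxY : ∀ n : ℕ, x ∉ Yn (n+1) := by
    intro n h
    exact ((hYmem n x).1 h).2 0 (Nat.zero_le n) rfl
  have hYdisj : ∀ {m n : ℕ} {z : X}, z ∈ Yn (m+1) → z ∈ Yn (n+1) → m = n := by
    intro m n z hm hn
    by_contra hne
    rcases Nat.lt_or_ge m n with h | h
    · exact ((hYmem n z).1 hn).2 (m+1) h ((hYmem m z).1 hm).1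
    · have h' : n < m := lt_of_le_of_ne h (Ne.symm hne)
      exact ((hYmem m z).1 hm).2 (n+1) h' ((hYmem n z).1 hn).1
  -- the unnormalized measure
  set w : ((n : ℕ) × (Yn (n+1) : Set X)) → ℝ≥0∞ := fun i =>
    ENNReal.ofReal (Real.exp (-β * ∑ j ∈ Finset.range (i.1+1), G (φ^[j] (i.2 : X)))) with hw
  set μ₀ : Measure X :=
    Measure.dirac x + Measure.sum (fun i => w i • Measure.dirac (i.2 : X)) with hμ₀
  have hμ₀app : ∀ B : Set X, MeasurableSet B →
      μ₀ B = B.indicator 1 x + ∑' i, w i * B.indicator 1 (i.2 : X) := by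
    intro B hB
    simp only [hμ₀, Measure.coe_add, Pi.add_apply, Measure.sum_apply _ hB, Measure.smul_apply,
      smul_eq_mul, Measure.dirac_apply' _ hB]
  have hμx : μ₀ {x} = 1 := by
    rw [hμ₀app {x} (measurableSet_singleton x)]
    have hz : ∀ i, w i * ({x} : Set X).indicator 1 (i.2 : X) = 0 := by
      intro i
      have hne : (i.2 : X) ∉ ({x} : Set X) := by
        simp only [Set.mem_singleton_iff]
        intro h
        exact hxY i.1 (h ▸ i.2.2)
      rw [Set.indicator_of_notMem hne, mul_zero]
    simp only [hz, tsum_zero, add_zero, Set.indicator_of_mem (Set.mem_singleton x), Pi.one_apply]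
  have hμy : ∀ (n : ℕ) (y : X), y ∈ Yn (n+1) →
      μ₀ {y} = ENNReal.ofReal (Real.exp (-β * ∑ j ∈ Finset.range (n+1), G (φ^[j] y))) := by
    intro n y hy
    rw [hμ₀app {y} (measurableSet_singleton y)]
    have hxy : x ∉ ({y} : Set X) := by
      simp only [Set.mem_singleton_iff]
      intro h
      exact hxY n (h ▸ hy)
    rw [Set.indicator_of_notMem hxy, zero_add]
    rw [tsum_eq_single (⟨n, ⟨y, hy⟩⟩ : (n : ℕ) × (Yn (n+1) : Set X))]
    · rw [Set.indicator_of_mem (Set.mem_singleton y), Pi.one_apply, mul_one]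
    · rintro ⟨m, ⟨z, hz⟩⟩ hi
      rcases eq_or_ne z y with rfl | h
      · exact absurd (by cases hYdisj hz hy; rfl) hi
      · rw [Set.indicator_of_notMem (by simpa using h), mul_zero]
  have hclass : ∀ a : X, (∃ n, φ^[n] a = x) → a = x ∨ ∃ n, a ∈ Yn (n+1) := by
    intro a ha
    by_cases h0 : Nat.find ha = 0
    · left
      have hs := Nat.find_spec ha
      rw [h0] at hs
      exact hs
    · right
      obtain ⟨k, hk⟩ := Nat.exists_eq_succ_of_ne_zero h0
      refine ⟨k, (hYmem k a).2 ⟨?_, ?_⟩⟩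
      · have hs := Nat.find_spec ha
        rw [hk] at hs
        exact hs
      · intro j hj hc
        have := Nat.find_min' ha hc
        omega
  -- the key conformality identity at atoms
  have hkey : ∀ a : X, (∃ n, φ^[n] a = x) →
      μ₀ {φ a} = ENNReal.ofReal (Real.exp (β * G a)) * μ₀ {a} := by
    intro a ha
    rcases hclass a ha with heq | ⟨n, hn⟩
    · rw [heq]
      rcases Nat.lt_or_ge 1 p with hp2 | hp1
      · -- p ≥ 2 : φ x lands in Yn (p-1)
        have hmem : φ x ∈ Yn (p-2+1) := by
          refine (hYmem _ _).2 ⟨?_, ?_⟩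
          · have h1 : φ^[p-2+1] (φ x) = φ^[p-2+1+1] x := (Function.iterate_succ_apply φ _ x).symm
            rw [h1, show p-2+1+1 = p by omega, hper]
          · intro j hj hc
            rw [← Function.iterate_succ_apply φ j x] at hc
            exact hmin (j+1) (Nat.succ_pos j) (by omega) hc
        rw [hμy _ _ hmem, hμx, mul_one]
        congr 2
        have h1 : ∀ j, φ^[j] (φ x) = φ^[j+1] x := fun j => (Function.iterate_succ_apply φ j x).symm
        have h2 := Finset.sum_range_succ' (fun j => G (φ^[j] x)) (p-2+1)
        rw [show p-2+1+1 = p by omega] at h2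
        rw [h2] at hzero
        have h3 : ∑ j ∈ Finset.range (p-2+1), G (φ^[j] (φ x))
            = ∑ j ∈ Finset.range (p-2+1), G (φ^[j+1] x) :=
          Finset.sum_congr rfl fun j _ => by rw [h1]
        rw [h3]
        simp only [Function.iterate_zero_apply] at hzero
        have h4 : ∑ j ∈ Finset.range (p-2+1), G (φ^[j+1] x) = -G x := by linarith
        rw [h4]
        ring
      · -- p = 1
        have hp1' : p = 1 := by omega
        have hφx : φ x = x := by
          have := hper
          rw [hp1'] at this
          simpa using this
        have hGx : G x = 0 := by
          have := hzero
          rw [hp1'] at this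
          simpa using this
        rw [hφx, hμx, hGx]
        simp
    · obtain ⟨h1, h2⟩ := (hYmem n a).1 hn
      cases n with
      | zero =>
        have hφa : φ a = x := by simpa using h1
        rw [hφa, hμx, hμy 0 a hn, ← ENNReal.ofReal_mul (Real.exp_nonneg _), ← Real.exp_add]
        have : β * G a + -β * ∑ j ∈ Finset.range 1, G (φ^[j] a) = 0 := by
          simp only [Finset.sum_range_one, Function.iterate_zero_apply]
          ring
        rw [this, Real.exp_zero, ENNReal.ofReal_one]
      | succ k =>
        have hmem : φ a ∈ Yn (k+1) := by
          refine (hYmem _ _).2 ⟨?_, ?_⟩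
          · rw [← Function.iterate_succ_apply φ (k+1) a]
            exact h1
          · intro j hj hc
            rw [← Function.iterate_succ_apply φ j a] at hc
            exact h2 (j+1) (by omega) hc
        rw [hμy _ _ hmem, hμy _ _ hn, ← ENNReal.ofReal_mul (Real.exp_nonneg _), ← Real.exp_add]
        congr 2
        have h3 : ∑ j ∈ Finset.range (k+1), G (φ^[j] (φ a))
            = ∑ j ∈ Finset.range (k+1), G (φ^[j+1] a) :=
          Finset.sum_congr rfl fun j _ => by rw [← Function.iterate_succ_apply φ j a]
        have h4 := Finset.sum_range_succ' (fun j => G (φ^[j] a)) (k+1)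
        simp only [Function.iterate_zero_apply] at h4
        rw [h3, h4]
        ring
    -- end hkey
  have hsum_w : ∑' i, w i = M := by
    rw [hM, ENNReal.tsum_sigma' w]
  have h1M0 : (1 : ℝ≥0∞) + M ≠ 0 := by
    simp
  have h1Mtop : (1 : ℝ≥0∞) + M ≠ ⊤ := ENNReal.add_ne_top.2 ⟨ENNReal.one_ne_top, hMfin⟩
  have hμ₀univ : μ₀ Set.univ = 1 + M := by
    rw [hμ₀app Set.univ MeasurableSet.univ]
    simp only [Set.indicator_univ, Pi.one_apply, mul_one]
    rw [hsum_w]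
  refine ⟨(1 + M)⁻¹ • μ₀, ⟨?_⟩, ?_, ?_⟩
  · rw [Measure.smul_apply, hμ₀univ, smul_eq_mul, ENNReal.inv_mul_cancel h1M0 h1Mtop]
  · intro B hB
    rw [Measure.smul_apply, smul_eq_mul, hμ₀app B hB]
    congr 1
    congr 1
    rw [ENNReal.tsum_sigma' (fun i => w i * B.indicator 1 (i.2 : X))]
    refine tsum_congr fun n => tsum_congr fun y => ?_
    by_cases hyB : (y : X) ∈ B
    · rw [Set.indicator_of_mem hyB, Set.indicator_of_mem hyB, Pi.one_apply, mul_one]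
    · rw [Set.indicator_of_notMem hyB, Set.indicator_of_notMem hyB, mul_zero]
  · intro A hA hinj
    have hAc : A.Countable := hΛ.mono hA
    have hIc : (φ '' A).Countable := hAc.image φ
    have hbiU : ∀ s : Set X, s.Countable → μ₀ s = ∑' z : s, μ₀ {(z : X)} := by
      intro s hs
      conv_lhs => rw [← Set.biUnion_of_singleton s]
      exact measure_biUnion hs (fun a _ b _ hab => Set.disjoint_singleton.2 hab)
        (fun b _ => measurableSet_singleton b)
    simp only [Measure.smul_apply, Measure.restrict_smul, lintegral_smul_measure, smul_eq_mul]
    congr 1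
    rw [hbiU _ hIc, lintegral_countable _ hAc]
    rw [← Equiv.tsum_eq (Equiv.Set.imageOfInjOn φ A hinj)
      (fun z : (φ '' A : Set X) => μ₀ {(z : X)})]
    refine tsum_congr fun a => ?_
    have hφa : ((Equiv.Set.imageOfInjOn φ A hinj) a : X) = φ (a : X) := rfl
    rw [hφa]
    exact hkey (a : X) (by simpa using hA a.2)
end
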